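/- For a convex admissible set U_ad = { q ∈ L²(0,1) : ∫₀¹ q(x) dx ≥ 0 } and given functions z ∈ L²(0,1), γ > 0, the variational inequality ∫₀¹ (γq + z)(v - q) dx ≥ 0 for all v ∈ U_ad holds if and only if γq = max{0, z̄} - z, where z̄ = ∫₀¹ z(x) dx. -/

import Mathlib

open MeasureTheory

/-- The admissible set `U_ad = { q ∈ L²(0,1) : ∫₀¹ q ≥ 0 }`, as a set of functions. -/
def Uad : Set (ℝ → ℝ) :=
  {q | MemLp q 2 (volume.restrict (Set.Ioo (0:ℝ) 1)) ∧ 0 ≤ ∫ x in Set.Ioo (0:ℝ) 1, q x}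

lemma int_mul_of_L2 {μ : Measure ℝ} {f g : ℝ → ℝ} (hf : MemLp f 2 μ) (hg : MemLp g 2 μ) :
    Integrable (fun x => f x * g x) μ := by
  have h : MemLp (f • g) 1 μ := by
    haveI : ENNReal.HolderTriple 2 2 1 := ⟨by simp [ENNReal.inv_two_add_inv_two]⟩
    exact hg.smul hf
  exact memLp_one_iff_integrable.mp h

/-- The variational inequality `∫₀¹ (γq + z)(v - q) ≥ 0` for all `v ∈ U_ad` holds
iff `γ q = max{0, z̄} - z` (as `L²` functions, i.e. a.e. on `(0,1)`), where
`z̄ = ∫₀¹ z`. -/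
theorem variational_inequality_iff (γ : ℝ) (hγ : 0 < γ) (q z : ℝ → ℝ)
    (hq : q ∈ Uad) (hz : MemLp z 2 (volume.restrict (Set.Ioo (0:ℝ) 1))) :
    (∀ v ∈ Uad, 0 ≤ ∫ x in Set.Ioo (0:ℝ) 1, (γ * q x + z x) * (v x - q x)) ↔
      (∀ᵐ x ∂(volume.restrict (Set.Ioo (0:ℝ) 1)),
        γ * q x = max 0 (∫ y in Set.Ioo (0:ℝ) 1, z y) - z x) := by
  set μ := volume.restrict (Set.Ioo (0:ℝ) 1) with hμdef
  haveI : IsProbabilityMeasure μ := ⟨by rw [hμdef]; simp [Real.volume_Ioo]⟩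
  obtain ⟨hq2, hqint⟩ := hq
  have hq1 : Integrable q μ := hq2.integrable one_le_two
  have hz1 : Integrable z μ := hz.integrable one_le_two
  have hp2 : MemLp (fun x => γ * q x + z x) 2 μ := (hq2.const_mul γ).add hz
  have hp1 : Integrable (fun x => γ * q x + z x) μ := hp2.integrable one_le_two
  set zb := ∫ x, z x ∂μ with hzb
  set c := ∫ x, (γ * q x + z x) ∂μ with hc
  set Q := ∫ x, q x ∂μ with hQdef
  have hcz : c = γ * Q + zb := by
    rw [hc, integral_add (hq1.const_mul γ) hz1, integral_const_mul, ← hzb, ← hQdef]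
  constructor
  · intro h
    set w := fun x => (γ * q x + z x) - c with hw
    have hw2 : MemLp w 2 μ := hp2.sub (memLp_const c)
    have hw1 : Integrable w μ := hw2.integrable one_le_two
    have hwint : ∫ x, w x ∂μ = 0 := by
      show ∫ x, ((γ * q x + z x) - c) ∂μ = 0
      rw [integral_sub hp1 (integrable_const c), ← hc, integral_const]
      simp
    have h1 := h (fun x => q x + w x)
      ⟨hq2.add hw2, by rw [integral_add hq1 hw1, hwint, add_zero]; exact hqint⟩
    have h2 := h (fun x => q x - w x)
      ⟨hq2.sub hw2, by rw [integral_sub hq1 hw1, hwint, sub_zero]; exact hqint⟩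
    have h1' : 0 ≤ ∫ x, (γ * q x + z x) * w x ∂μ := by simpa using h1
    have h2' : 0 ≤ - ∫ x, (γ * q x + z x) * w x ∂μ := by
      simpa [mul_neg, integral_neg] using h2
    have hpw : ∫ x, (γ * q x + z x) * w x ∂μ = 0 := le_antisymm (by linarith) h1'
    have e : ∀ x, w x * w x = (γ * q x + z x) * w x - c * w x := by
      intro x; simp only [hw]; ring
    have hw2int : ∫ x, w x * w x ∂μ = 0 := by
      calc ∫ x, w x * w x ∂μ
          = ∫ x, ((γ * q x + z x) * w x - c * w x) ∂μ := by simp only [e]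
        _ = (∫ x, (γ * q x + z x) * w x ∂μ) - c * ∫ x, w x ∂μ := by
            rw [integral_sub (int_mul_of_L2 hp2 hw2) (hw1.const_mul c), integral_const_mul]
        _ = 0 := by rw [hpw, hwint]; ring
    have hwzero : w =ᵐ[μ] 0 := by
      have hnn : 0 ≤ᵐ[μ] fun x => w x * w x :=
        Filter.Eventually.of_forall fun x => mul_self_nonneg _
      have hint : Integrable (fun x => w x * w x) μ := int_mul_of_L2 hw2 hw2
      have hz0 := (integral_eq_zero_iff_of_nonneg_ae hnn hint).mp hw2int
      filter_upwards [hz0] with x hx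
      exact mul_self_eq_zero.mp hx
    have hpc : ∀ᵐ x ∂μ, γ * q x + z x = c := by
      filter_upwards [hwzero] with x hx
      have : (γ * q x + z x) - c = 0 := hx
      linarith
    have hc0 : 0 ≤ c := by
      have h3 := h (fun x => q x + 1)
        ⟨hq2.add (memLp_const 1), by
          rw [integral_add hq1 (integrable_const 1), integral_const]
          simp; linarith⟩
      rw [hc]; simpa using h3
    have hcq0 : c * Q ≤ 0 := by
      have h0 := h (fun _ => 0) ⟨memLp_const 0, by simp⟩
      simp only [zero_sub, mul_neg] at h0
      rw [integral_neg] at h0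
      have hpq : ∫ x, (γ * q x + z x) * q x ∂μ ≤ 0 := by linarith
      have hcq : ∫ x, (γ * q x + z x) * q x ∂μ = c * Q := by
        rw [hQdef, ← integral_const_mul]
        refine integral_congr_ae ?_
        filter_upwards [hpc] with x hx
        rw [hx]
      linarith [hcq ▸ hpq]
    have hzbc : zb = c - γ * Q := by linarith
    have hmax : max 0 zb = c := by
      by_cases hQ0 : Q = 0
      · have hzc : zb = c := by rw [hzbc, hQ0]; ring
        rw [hzc]; exact max_eq_right hc0
      · have hQpos : 0 < Q := lt_of_le_of_ne hqint (Ne.symm hQ0)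
        have hc0' : c = 0 := le_antisymm (by nlinarith) hc0
        have hzneg : zb ≤ 0 := by rw [hzbc, hc0']; nlinarith
        rw [max_eq_left hzneg, hc0']
    filter_upwards [hpc] with x hx
    rw [hmax]; linarith
  · intro hae v hv
    obtain ⟨hv2, hvint⟩ := hv
    have hv1 : Integrable v μ := hv2.integrable one_le_two
    have hm0 : (0:ℝ) ≤ max 0 zb := le_max_left _ _
    have key : ∫ x, (γ * q x + z x) * (v x - q x) ∂μ
        = (max 0 zb) * ((∫ x, v x ∂μ) - Q) := by
      rw [hQdef, ← integral_sub hv1 hq1, ← integral_const_mul]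
      refine integral_congr_ae ?_
      filter_upwards [hae] with x hx
      have : γ * q x + z x = max 0 zb := by linarith
      rw [this]
    rw [key]
    have hQ : γ * Q = max 0 zb - zb := by
      have h2 : ∫ x, (γ * q x) ∂μ = ∫ x, (max 0 zb - z x) ∂μ :=
        integral_congr_ae (by filter_upwards [hae] with x hx; exact hx)
      have h1 : ∫ x, (γ * q x) ∂μ = γ * Q := by rw [integral_const_mul, ← hQdef]
      have h3 : ∫ x, (max 0 zb - z x) ∂μ = max 0 zb - zb := by
        rw [integral_sub (integrable_const _) hz1, integral_const, ← hzb]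
        simp
      linarith
    rcases le_or_gt zb 0 with hle | hpos
    · rw [max_eq_left hle]; simp
    · have hm : max 0 zb = zb := max_eq_right hpos.le
      have hQ0 : Q = 0 := by
        rw [hm, sub_self] at hQ
        exact (mul_eq_zero.mp hQ).resolve_left (ne_of_gt hγ)
      rw [hQ0, sub_zero]
      exact mul_nonneg hm0 hvint
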